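/- arXiv:0803.2131 — 2 statements merged into one kernel-verified Lean document; each statement's English description precedes it below -/
import Mathlib

section
/- Let σ₀ = {0} ∪ {(-1)^k/k : k = 1, 2, 3, ...}, a compact subset of ℝ, and let c₀ denote the Banach space of complex sequences converging to 0 with the supremum norm. There exist a bounded linear operator T on c₀ and a constant C > 0 such that ‖p(T)‖ ≤ C·(sup_{t∈σ₀}|p(t)| + var_{σ₀}(p)) for every polynomial p with complex coefficients (where p(T) is given by the polynomial functional calculus and p is regarded as the function t ↦ p(t) on ℝ), yet there is no BV(σ₀) extension of the polynomial calculus of T. -/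
open MeasureTheory Filter Topology ZeroAtInfty

/-- The set `σ₀ = {0} ∪ {(-1)^k/k : k ≥ 1}`. -/
noncomputable def sigma0 : Set ℝ := {0} ∪ {t : ℝ | ∃ k : ℕ, 1 ≤ k ∧ t = (-1) ^ k / k}

lemma zero_mem_sigma0 : (0 : ℝ) ∈ sigma0 := Or.inl rfl

lemma mem_sigma0 (k : ℕ) (hk : 1 ≤ k) : ((-1 : ℝ)) ^ k / k ∈ sigma0 :=
  Or.inr ⟨k, hk, rfl⟩

lemma sigma0_eq : sigma0 = insert (0 : ℝ) (Set.range fun k : ℕ => ((-1 : ℝ)) ^ (k + 1) / (k + 1)) := by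
  ext t
  simp only [sigma0, Set.mem_union, Set.mem_singleton_iff, Set.mem_setOf_eq, Set.mem_insert_iff,
    Set.mem_range]
  constructor
  · rintro (h | ⟨k, hk, rfl⟩)
    · exact Or.inl h
    · right
      refine ⟨k - 1, ?_⟩
      have hk' : k - 1 + 1 = k := Nat.succ_pred_eq_of_pos hk
      rw [hk']
      congr 1
      exact_mod_cast congrArg (Nat.cast : ℕ → ℝ) hk'
  · rintro (h | ⟨k, rfl⟩)
    · exact Or.inl h
    · right
      exact ⟨k + 1, Nat.le_add_left 1 k, by push_cast; ring⟩

lemma sigma0_isCompact : IsCompact sigma0 := by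
  rw [sigma0_eq]
  have h : Tendsto (fun k : ℕ => ((-1 : ℝ)) ^ (k + 1) / (k + 1)) atTop (𝓝 0) := by
    apply squeeze_zero_norm (a := fun k : ℕ => 1 / ((k : ℝ) + 1))
    · intro k
      rw [norm_div, norm_pow, norm_neg, norm_one, one_pow]
      simp [Real.norm_eq_abs, abs_of_nonneg (by positivity : (0:ℝ) ≤ (k:ℝ) + 1)]
    · exact tendsto_one_div_add_atTop_nhds_zero_nat
  exact h.isCompact_insert_range

instance : CompactSpace ↥sigma0 := isCompact_iff_compactSpace.mp sigma0_isCompact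

/-- The `BV(σ)` norm-type quantity `sup_{t ∈ σ} |f(t)| + var_σ(f)`. -/
noncomputable def bvNorm (σ : Set ℝ) (f : ℝ → ℂ) : ℝ :=
  sSup ((fun t => ‖f t‖) '' σ) + (eVariationOn f σ).toReal

/-- A `BV(σ)` extension of the polynomial calculus of a bounded operator `T` on a complex
Banach space `X`: a pair `(Ψ, C')` with `C' > 0`, `Ψ` additive and multiplicative on functions
of bounded variation on `σ`, `‖Ψ(f)‖ ≤ C'·(sup_{t∈σ}|f(t)| + var_σ(f))` for such `f`, and
`Ψ(p) = p(T)` for every polynomial `p`. -/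
def HasBVExtension {X : Type*} [NormedAddCommGroup X] [NormedSpace ℂ X]
    (σ : Set ℝ) (T : X →L[ℂ] X) : Prop :=
  ∃ (C' : ℝ) (_ : 0 < C') (Ψ : (ℝ → ℂ) → X →L[ℂ] X),
    (∀ f g : ℝ → ℂ, BoundedVariationOn f σ → BoundedVariationOn g σ →
      Ψ (f + g) = Ψ f + Ψ g ∧ Ψ (f * g) = (Ψ f).comp (Ψ g)) ∧
    (∀ f : ℝ → ℂ, BoundedVariationOn f σ → ‖Ψ f‖ ≤ C' * bvNorm σ f) ∧
    (∀ p : Polynomial ℂ, Ψ (fun t : ℝ => p.eval (t : ℂ)) = Polynomial.aeval T p)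

/-!
The operator is `(T x)_k = λ_k (x_k + x_0)` with `λ_k = (-1)^k / k`, so that
`(p(T) x)_k = p(λ_k) x_k + (p(λ_k) - p(0)) x_0` and `‖p(T)‖ ≤ 3 sup_{σ₀} |p|`.

Suppose `Ψ` were a `BV(σ₀)` extension and let `P = Ψ(u)` for the jump `u = 1_{(0, ∞)}`. For
`n ≥ 1`, `e_n` is an eigenvector of `T` for `λ_n`, so `q_m(T) e_n = e_n` for the peak polynomials
`q_m(t) = (1 - (t - λ_n)² / 4)^m`, hence `Ψ(f) e_n = Ψ(f q_m) e_n`. If `λ_n < 0` then `u q_m` has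
BV norm `O((1 - λ_n² / 4)^m)` on `σ₀`, so `P e_n = 0`; if `λ_n > 0` the same holds for
`(1 - u) q_m`, so `P e_n = e_n`. Since `P` commutes with `T` and `T e_0 = (λ_k)_k`, the vector
`w = P e_0` satisfies `w_j + w_0 = u(λ_j)` for `j ≥ 1`. As `w_j → 0`, the sequence `u(λ_j)`,
which alternates between `0` and `1`, would converge to `w_0`.
-/

open Set Polynomial

noncomputable section

section Variation

variable {α : Type*} [LinearOrder α]

theorem eVariationOn_sub_le {E : Type*} [SeminormedAddCommGroup E] (f g : α → E) (s : Set α) :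
    eVariationOn (f - g) s ≤ eVariationOn f s + eVariationOn g s := by
  refine iSup_le fun ⟨n, u, hu, us⟩ => ?_
  calc ∑ i ∈ Finset.range n, edist ((f - g) (u (i + 1))) ((f - g) (u i))
      ≤ ∑ i ∈ Finset.range n,
          (edist (f (u (i + 1))) (f (u i)) + edist (g (u (i + 1))) (g (u i))) :=
        Finset.sum_le_sum fun i _ => by
          simpa only [Pi.sub_apply, sub_eq_add_neg, edist_neg_neg] using
            edist_add_add_le (f (u (i + 1))) (-g (u (i + 1))) (f (u i)) (-g (u i))
    _ ≤ eVariationOn f s + eVariationOn g s := by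
        rw [Finset.sum_add_distrib]
        exact add_le_add (eVariationOn.sum_le hu us) (eVariationOn.sum_le hu us)

theorem MonotoneOn.eVariationOn_le_of_mapsTo {φ : α → ℝ} {s : Set α} {a b : ℝ}
    (hφ : MonotoneOn φ s) (hs : MapsTo φ s (Icc a b)) :
    eVariationOn φ s ≤ ENNReal.ofReal (b - a) := by
  rw [eVariationOn.eq_biSup_inter_Icc]
  simp only [mem_ofPred_eq, iSup_le_iff, and_imp, Prod.forall]
  intro x y hx hy _
  rw [hφ.eVariationOn_eq hx hy]
  exact ENNReal.ofReal_le_ofReal (by linarith [(hs hx).1, (hs hy).2])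

end Variation

theorem bvNorm_nonneg (σ : Set ℝ) (f : ℝ → ℂ) : 0 ≤ bvNorm σ f :=
  add_nonneg (Real.sSup_nonneg fun _ ⟨_, _, h⟩ => h ▸ norm_nonneg _) ENNReal.toReal_nonneg

theorem norm_le_bvNorm {σ : Set ℝ} {f : ℝ → ℂ} (hσ : IsCompact σ) (hf : ContinuousOn f σ)
    {t : ℝ} (ht : t ∈ σ) : ‖f t‖ ≤ bvNorm σ f :=
  (le_csSup (hσ.bddAbove_image hf.norm) (mem_image_of_mem _ ht)).trans
    (le_add_of_nonneg_right ENNReal.toReal_nonneg)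

theorem boundedVariationOn_of_contDiff {E : Type*} [NormedAddCommGroup E] [NormedSpace ℝ E]
    {σ : Set ℝ} (hσ : IsCompact σ) {f : ℝ → E} (hf : ContDiff ℝ 1 f) :
    BoundedVariationOn f σ := by
  obtain ⟨K, hK⟩ :=
    hf.locallyLipschitz.locallyLipschitzOn.exists_lipschitzOnWith_of_compact hσ
  obtain ⟨C, hC⟩ := hσ.isBounded.exists_norm_le
  exact hK.comp_boundedVariationOn (mapsTo_id σ)
    ((monotone_id.monotoneOn σ).boundedVariationOn (C := C) hC)

theorem boundedVariationOn_polynomial_eval {σ : Set ℝ} (hσ : IsCompact σ) (p : ℂ[X]) :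
    BoundedVariationOn (fun t : ℝ => p.eval (t : ℂ)) σ :=
  boundedVariationOn_of_contDiff hσ
    (((p.contDiff_aeval (𝕜 := ℂ) 1).restrict_scalars ℝ).comp Complex.ofRealCLM.contDiff)

theorem bvNorm_ofReal_sub_le {s : Set ℝ} {φ ψ : ℝ → ℝ} {ε : ℝ} (hε : 0 ≤ ε)
    (hφ : MonotoneOn φ s) (hψ : MonotoneOn ψ s) (hφs : MapsTo φ s (Icc 0 ε))
    (hψs : MapsTo ψ s (Icc 0 ε)) :
    BoundedVariationOn (fun t => ((φ t - ψ t : ℝ) : ℂ)) s ∧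
      bvNorm s (fun t => ((φ t - ψ t : ℝ) : ℂ)) ≤ 3 * ε := by
  have hvar : eVariationOn (fun t => ((φ t - ψ t : ℝ) : ℂ)) s ≤ ENNReal.ofReal (2 * ε) :=
    calc eVariationOn (Complex.ofReal ∘ (φ - ψ)) s
        ≤ eVariationOn (φ - ψ) s := by
          simpa only [ENNReal.coe_one, one_mul] using
            Complex.isometry_ofReal.lipschitz.lipschitzOnWith.comp_eVariationOn_le (mapsTo_univ _ s)
      _ ≤ eVariationOn φ s + eVariationOn ψ s := eVariationOn_sub_le φ ψ s
      _ ≤ ENNReal.ofReal (ε - 0) + ENNReal.ofReal (ε - 0) :=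
          add_le_add (hφ.eVariationOn_le_of_mapsTo hφs) (hψ.eVariationOn_le_of_mapsTo hψs)
      _ = ENNReal.ofReal (2 * ε) := by rw [sub_zero, ← ENNReal.ofReal_add hε hε, two_mul]
  refine ⟨ne_top_of_le_ne_top ENNReal.ofReal_ne_top hvar, ?_⟩
  suffices sSup ((fun t => ‖((φ t - ψ t : ℝ) : ℂ)‖) '' s) ≤ ε by
    rw [bvNorm]
    linarith [ENNReal.toReal_le_of_le_ofReal (by positivity) hvar]
  refine Real.sSup_le ?_ hε
  rintro _ ⟨t, ht, rfl⟩
  dsimp only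
  rw [Complex.norm_real, Real.norm_eq_abs, abs_le]
  constructor <;> linarith [(hφs ht).1, (hφs ht).2, (hψs ht).1, (hψs ht).2]

section Indicator

variable {s : Set ℝ} {c ε : ℝ} {r : ℝ → ℝ}

theorem bvNorm_indicator_Ioi_le (hε : 0 ≤ ε) (hr : AntitoneOn r (s ∩ Ioi c))
    (hrs : MapsTo r (s ∩ Ioi c) (Icc 0 ε)) :
    BoundedVariationOn ((Ioi c).indicator fun t => (r t : ℂ)) s ∧
      bvNorm s ((Ioi c).indicator fun t => (r t : ℂ)) ≤ 3 * ε := by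
  have heq : ((Ioi c).indicator fun t => (r t : ℂ)) = fun t =>
      (((Ioi c).indicator (fun _ => ε) t - (Ioi c).indicator (fun t => ε - r t) t : ℝ) : ℂ) := by
    ext t; by_cases ht : t ∈ Ioi c <;> simp [ht]
  rw [heq]
  refine bvNorm_ofReal_sub_le hε ?_ ?_ ?_ ?_ <;>
    simp only [MonotoneOn, MapsTo, indicator_apply, mem_Ioi]
  · intro a _ b _ hab
    split_ifs <;> linarith
  · intro a ha b hb hab
    split_ifs with ha' hb' hb'
    · linarith [hr ⟨ha, ha'⟩ ⟨hb, hb'⟩ hab]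
    · exact absurd (ha'.trans_le hab) hb'
    · linarith [(hrs ⟨hb, hb'⟩).2]
    · exact le_rfl
  · intro t _
    split_ifs <;> simp [hε]
  · intro t ht
    split_ifs with ht'
    · exact ⟨by linarith [(hrs ⟨ht, ht'⟩).2], by linarith [(hrs ⟨ht, ht'⟩).1]⟩
    · simp [hε]

theorem bvNorm_indicator_Iic_le (hε : 0 ≤ ε) (hr : MonotoneOn r (s ∩ Iic c))
    (hrs : MapsTo r (s ∩ Iic c) (Icc 0 ε)) :
    BoundedVariationOn ((Iic c).indicator fun t => (r t : ℂ)) s ∧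
      bvNorm s ((Iic c).indicator fun t => (r t : ℂ)) ≤ 3 * ε := by
  have heq : ((Iic c).indicator fun t => (r t : ℂ)) = fun t =>
      (((Iic c).piecewise r (fun _ => ε) t - (Ioi c).indicator (fun _ => ε) t : ℝ) : ℂ) := by
    ext t; by_cases ht : t ≤ c <;> simp [ht, piecewise, not_le.mp]
  rw [heq]
  refine bvNorm_ofReal_sub_le hε ?_ ?_ ?_ ?_ <;>
    simp only [MonotoneOn, MapsTo, piecewise, indicator_apply, mem_Ioi, mem_Iic]
  · intro a ha b hb hab
    split_ifs with ha' hb' hb'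
    · exact hr ⟨ha, ha'⟩ ⟨hb, hb'⟩ hab
    · exact (hrs ⟨ha, ha'⟩).2
    · exact absurd (hab.trans hb') ha'
    · exact le_rfl
  · intro a _ b _ hab
    split_ifs <;> linarith
  · intro t ht
    split_ifs with ht'
    · exact hrs ⟨ht, ht'⟩
    · simp [hε]
  · intro t _
    split_ifs <;> simp [hε]

end Indicator

def bump (l : ℝ) (m : ℕ) : ℂ[X] := (1 - C (1 / 4 : ℂ) * (X - C (l : ℂ)) ^ 2) ^ m

def bumpFun (l : ℝ) (m : ℕ) (t : ℝ) : ℝ := (1 - (t - l) ^ 2 / 4) ^ m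

section Bump

variable {l : ℝ} {m : ℕ}

theorem bump_eval (t : ℝ) : (bump l m).eval (t : ℂ) = bumpFun l m t := by
  simp only [bump, bumpFun, eval_pow, eval_sub, eval_one, eval_mul, eval_C, eval_X]
  push_cast
  ring

theorem bumpFun_self : bumpFun l m l = 1 := by simp [bumpFun]

theorem bumpFun_nonneg {t : ℝ} (ht : t ∈ Icc (l - 2) (l + 2)) : 0 ≤ bumpFun l m t :=
  pow_nonneg (by nlinarith [ht.1, ht.2]) m

theorem bumpFun_monotoneOn : MonotoneOn (bumpFun l m) (Icc (l - 2) l) :=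
  fun a ha b hb hab =>
    pow_le_pow_left₀ (by nlinarith [ha.1, ha.2]) (by nlinarith [ha.1, hb.2]) m

theorem bumpFun_antitoneOn : AntitoneOn (bumpFun l m) (Icc l (l + 2)) :=
  fun a ha b hb hab =>
    pow_le_pow_left₀ (by nlinarith [hb.1, hb.2]) (by nlinarith [ha.1, hb.2]) m

theorem tendsto_bumpFun_zero (hl : l ≠ 0) (hl2 : |l| ≤ 2) :
    Tendsto (fun m => bumpFun l m 0) atTop (𝓝 0) := by
  have hl' : 0 < l ^ 2 := by positivity
  have hl2' : l ^ 2 ≤ 4 := by nlinarith [abs_le.mp hl2, sq_abs l]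
  exact tendsto_pow_atTop_nhds_zero_of_lt_one (by nlinarith) (by nlinarith)

end Bump

def heaviside : ℝ → ℂ := (Ioi 0).indicator 1

theorem heaviside_add_indicator_Iic : heaviside + (Iic 0).indicator 1 = 1 := by
  ext t; by_cases ht : 0 < t <;> simp [heaviside, ht, not_lt.mp]

theorem heaviside_of_pos {t : ℝ} (ht : 0 < t) : heaviside t = 1 := by simp [heaviside, ht]

theorem heaviside_of_nonpos {t : ℝ} (ht : t ≤ 0) : heaviside t = 0 := by
  simp [heaviside, ht]

theorem boundedVariationOn_heaviside (s : Set ℝ) : BoundedVariationOn heaviside s := by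
  simpa [heaviside, Pi.one_def] using (bvNorm_indicator_Ioi_le (s := s) (c := 0) (r := 1)
    zero_le_one antitoneOn_const fun _ _ => ⟨zero_le_one, le_rfl⟩).1

theorem boundedVariationOn_indicator_Iic (s : Set ℝ) :
    BoundedVariationOn ((Iic 0).indicator 1 : ℝ → ℂ) s := by
  simpa [Pi.one_def] using (bvNorm_indicator_Iic_le (s := s) (c := 0) (r := 1)
    zero_le_one monotoneOn_const fun _ _ => ⟨zero_le_one, le_rfl⟩).1

theorem bvNorm_heaviside_mul_bump_le {s : Set ℝ} {l : ℝ} (hs : s ⊆ Icc (l - 2) (l + 2))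
    (hl : l ∈ Icc (-2) 0) (m : ℕ) :
    BoundedVariationOn (heaviside * fun t : ℝ => (bump l m).eval (t : ℂ)) s ∧
      bvNorm s (heaviside * fun t : ℝ => (bump l m).eval (t : ℂ)) ≤ 3 * bumpFun l m 0 := by
  have heq : (heaviside * fun t : ℝ => (bump l m).eval (t : ℂ)) =
      (Ioi 0).indicator fun t => (bumpFun l m t : ℂ) := by
    ext t; by_cases ht : 0 < t <;> simp [heaviside, ht, bump_eval]
  have h0 : (0 : ℝ) ∈ Icc l (l + 2) := ⟨hl.2, by linarith [hl.1]⟩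
  have hsub : s ∩ Ioi 0 ⊆ Icc l (l + 2) := fun t ht =>
    ⟨by linarith [hl.2, ht.2.out], (hs ht.1).2⟩
  rw [heq]
  exact bvNorm_indicator_Ioi_le (bumpFun_nonneg ⟨by linarith [hl.2], by linarith [hl.1]⟩)
    (bumpFun_antitoneOn.mono hsub) fun t ht =>
      ⟨bumpFun_nonneg (hs ht.1), bumpFun_antitoneOn h0 (hsub ht) (le_of_lt ht.2)⟩

theorem bvNorm_indicator_Iic_mul_bump_le {s : Set ℝ} {l : ℝ} (hs : s ⊆ Icc (l - 2) (l + 2))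
    (hl : l ∈ Icc 0 2) (m : ℕ) :
    BoundedVariationOn ((Iic 0).indicator 1 * fun t : ℝ => (bump l m).eval (t : ℂ)) s ∧
      bvNorm s ((Iic 0).indicator 1 * fun t : ℝ => (bump l m).eval (t : ℂ)) ≤
        3 * bumpFun l m 0 := by
  have heq : ((Iic 0).indicator 1 * fun t : ℝ => (bump l m).eval (t : ℂ)) =
      (Iic 0).indicator fun t => (bumpFun l m t : ℂ) := by
    ext t; by_cases ht : t ≤ 0 <;> simp [ht, bump_eval]
  have h0 : (0 : ℝ) ∈ Icc (l - 2) l := ⟨by linarith [hl.2], hl.1⟩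
  have hsub : s ∩ Iic 0 ⊆ Icc (l - 2) l := fun t ht =>
    ⟨(hs ht.1).1, by linarith [hl.1, ht.2.out]⟩
  rw [heq]
  exact bvNorm_indicator_Iic_le (bumpFun_nonneg ⟨by linarith [hl.2], by linarith [hl.1]⟩)
    (bumpFun_monotoneOn.mono hsub) fun t ht =>
      ⟨bumpFun_nonneg (hs ht.1), bumpFun_monotoneOn (hsub ht) h0 ht.2⟩

namespace ZeroAtInftyContinuousMap

section Norm

variable {α E : Type*} [TopologicalSpace α] [SeminormedAddCommGroup E]

theorem norm_apply_le (f : C₀(α, E)) (x : α) : ‖f x‖ ≤ ‖f‖ :=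
  norm_toBCF_eq_norm (f := f) ▸ f.toBCF.norm_coe_le_norm x

theorem norm_le {f : C₀(α, E)} {C : ℝ} (hC : 0 ≤ C) : ‖f‖ ≤ C ↔ ∀ x, ‖f x‖ ≤ C :=
  norm_toBCF_eq_norm (f := f) ▸ BoundedContinuousFunction.norm_le hC

variable (𝕜 : Type*) [NormedField 𝕜] [NormedSpace 𝕜 E]

def evalCLM (x : α) : C₀(α, E) →L[𝕜] E :=
  LinearMap.mkContinuous ⟨⟨fun f => f x, fun _ _ => rfl⟩, fun _ _ => rfl⟩ 1 fun f => by
    simpa using norm_apply_le f x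

@[simp] theorem evalCLM_apply (x : α) (f : C₀(α, E)) : evalCLM 𝕜 x f = f x := rfl

end Norm

section Nat

variable {β : Type*} [TopologicalSpace β] [Zero β]

def mkNat (f : ℕ → β) (hf : Tendsto f atTop (𝓝 0)) : C₀(ℕ, β) :=
  ⟨⟨f, continuous_of_discreteTopology⟩, cocompact_eq_atTop (α := ℕ) ▸ hf⟩

@[simp] theorem mkNat_apply (f : ℕ → β) (hf : Tendsto f atTop (𝓝 0)) (k : ℕ) :
    mkNat f hf k = f k := rfl

theorem tendsto_apply_atTop (f : C₀(ℕ, β)) : Tendsto f atTop (𝓝 0) :=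
  cocompact_eq_atTop (α := ℕ) ▸ f.zero_at_infty'

end Nat

end ZeroAtInftyContinuousMap

open ZeroAtInftyContinuousMap

def unitVec (n : ℕ) : C₀(ℕ, ℂ) :=
  mkNat (Pi.single n 1 : ℕ → ℂ) (tendsto_const_nhds.congr' <|
    (eventually_gt_atTop n).mono fun _ hk => by simp [hk.ne'])

theorem unitVec_apply (n k : ℕ) : unitVec n k = (Pi.single n 1 : ℕ → ℂ) k := rfl

theorem sum_smul_unitVec_apply (a : ℕ → ℂ) (N j : ℕ) :
    (∑ k ∈ Finset.range N, a k • unitVec k) j = if j < N then a j else 0 := by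
  rw [← evalCLM_apply ℂ, map_sum]
  simp [unitVec_apply, Pi.single_apply]

theorem tendsto_sum_smul_unitVec (x : C₀(ℕ, ℂ)) :
    Tendsto (fun N => ∑ k ∈ Finset.range N, x k • unitVec k) atTop (𝓝 x) := by
  refine Metric.tendsto_atTop.2 fun ε hε => ?_
  obtain ⟨N₀, hN₀⟩ := Metric.tendsto_atTop.1 (tendsto_apply_atTop x) (ε / 2) (half_pos hε)
  refine ⟨N₀, fun N hN => ?_⟩
  rw [dist_eq_norm]
  refine lt_of_le_of_lt ((norm_le (half_pos hε).le).2 fun k => ?_) (half_lt_self hε)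
  rw [ZeroAtInftyContinuousMap.sub_apply, sum_smul_unitVec_apply]
  split_ifs with hk
  · simpa using (half_pos hε).le
  · simpa using (hN₀ k (by omega)).le

theorem apply_apply_of_apply_unitVec (P : C₀(ℕ, ℂ) →L[ℂ] C₀(ℕ, ℂ)) (c : ℕ → ℂ)
    (hP : ∀ n ≠ 0, P (unitVec n) = c n • unitVec n) {y : C₀(ℕ, ℂ)} (hy : y 0 = 0) (j : ℕ) :
    P y j = c j * y j := by
  have hsum : ∀ N, P (∑ k ∈ Finset.range N, y k • unitVec k) =
      ∑ k ∈ Finset.range N, (c k * y k) • unitVec k := fun N => by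
    rw [map_sum]
    refine Finset.sum_congr rfl fun k _ => ?_
    rcases eq_or_ne k 0 with rfl | hk
    · simp [hy]
    · rw [map_smul, hP k hk, smul_smul, mul_comm]
  have hlim := ((evalCLM ℂ j).continuous.tendsto _).comp
    ((P.continuous.tendsto y).comp (tendsto_sum_smul_unitVec y))
  refine tendsto_nhds_unique hlim (tendsto_const_nhds.congr' ?_)
  filter_upwards [eventually_gt_atTop j] with N hN
  simp only [Function.comp_apply, evalCLM_apply, hsum, sum_smul_unitVec_apply, if_pos hN]

-- `lam 0 = 0` because `x / 0 = 0`, so `lam` maps `ℕ` onto `σ₀`.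
def lam (k : ℕ) : ℝ := (-1) ^ k / k

theorem lam_zero : lam 0 = 0 := by simp [lam]

theorem lam_ne_zero {k : ℕ} (hk : k ≠ 0) : lam k ≠ 0 := by simp [lam, hk]

theorem lam_mem_sigma0 (k : ℕ) : lam k ∈ sigma0 := by
  rcases Nat.eq_zero_or_pos k with rfl | hk
  · exact lam_zero ▸ zero_mem_sigma0
  · exact mem_sigma0 k hk

theorem sigma0_subset_Icc : sigma0 ⊆ Icc (-1) 1 := by
  rintro t (rfl | ⟨k, hk, rfl⟩)
  · norm_num
  · rw [mem_Icc, ← abs_le, abs_div, abs_pow, abs_neg, abs_one, one_pow, Nat.abs_cast]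
    exact div_le_one_of_le₀ (by exact_mod_cast hk) (Nat.cast_nonneg k)

theorem tendsto_lam : Tendsto lam atTop (𝓝 0) := by
  refine squeeze_zero_norm (fun k => ?_) tendsto_one_div_atTop_nhds_zero_nat
  simp [lam]

theorem lam_pos_of_even {k : ℕ} (hk : Even k) (hk0 : k ≠ 0) : 0 < lam k := by
  rw [lam, hk.neg_one_pow]
  exact div_pos one_pos (by exact_mod_cast Nat.pos_of_ne_zero hk0)

theorem lam_neg_of_odd {k : ℕ} (hk : Odd k) : lam k < 0 := by
  rw [lam, hk.neg_one_pow]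
  exact div_neg_of_neg_of_pos neg_one_lt_zero (by exact_mod_cast hk.pos)

def lamVec : C₀(ℕ, ℂ) :=
  mkNat (fun k => (lam k : ℂ))
    ((Complex.continuous_ofReal.tendsto' 0 0 Complex.ofReal_zero).comp tendsto_lam)

def opT : C₀(ℕ, ℂ) →L[ℂ] C₀(ℕ, ℂ) :=
  ContinuousLinearMap.mul ℂ C₀(ℕ, ℂ) lamVec + (evalCLM ℂ 0).smulRight lamVec

theorem opT_apply (x : C₀(ℕ, ℂ)) (k : ℕ) : opT x k = lam k * (x k + x 0) := by
  simp [opT, lamVec, mul_add, mul_comm]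

theorem opT_unitVec_zero : opT (unitVec 0) = lamVec := by
  ext k
  by_cases hk : k = 0 <;> simp [opT_apply, unitVec_apply, lamVec, hk, lam_zero]

theorem aeval_opT_apply (p : ℂ[X]) (x : C₀(ℕ, ℂ)) (k : ℕ) :
    aeval opT p x k = p.eval (lam k : ℂ) * x k + (p.eval (lam k : ℂ) - p.eval 0) * x 0 := by
  induction p using Polynomial.induction_on generalizing x with
  | C a => simp [Algebra.algebraMap_eq_smul_one]
  | add p q hp hq =>
    simp only [map_add, _root_.add_apply, ZeroAtInftyContinuousMap.add_apply, hp, hq, eval_add]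
    ring
  | monomial n a ih =>
    rw [pow_succ, ← mul_assoc, map_mul, aeval_X, mul_apply_eq_comp, ih, opT_apply,
      opT_apply, lam_zero]
    simp only [eval_mul, eval_X]
    push_cast
    ring

theorem aeval_opT_unitVec (p : ℂ[X]) {n : ℕ} (hn : n ≠ 0) :
    aeval opT p (unitVec n) = p.eval (lam n : ℂ) • unitVec n := by
  ext k
  by_cases hk : k = n
  · subst hk; simp [aeval_opT_apply, unitVec_apply, hn]
  · simp [aeval_opT_apply, unitVec_apply, hn, hk]

theorem norm_aeval_opT_le (p : ℂ[X]) :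
    ‖aeval opT p‖ ≤ 3 * bvNorm sigma0 (fun t : ℝ => p.eval (t : ℂ)) := by
  set M := bvNorm sigma0 (fun t : ℝ => p.eval (t : ℂ))
  have hM : ∀ k, ‖p.eval (lam k : ℂ)‖ ≤ M := fun k =>
    norm_le_bvNorm sigma0_isCompact (p.continuous.comp Complex.continuous_ofReal).continuousOn
      (lam_mem_sigma0 k)
  have hM0 : ‖p.eval 0‖ ≤ M := by simpa [lam_zero] using hM 0
  have hM' : 0 ≤ M := bvNorm_nonneg _ _
  refine ContinuousLinearMap.opNorm_le_bound _ (by positivity) fun x => ?_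
  refine (norm_le (by positivity)).2 fun k => ?_
  rw [aeval_opT_apply]
  calc _ ≤ ‖p.eval (lam k : ℂ)‖ * ‖x k‖ + (‖p.eval (lam k : ℂ)‖ + ‖p.eval 0‖) * ‖x 0‖ := by
        grw [norm_add_le, norm_mul, norm_mul, norm_sub_le]
    _ ≤ M * ‖x‖ + (M + M) * ‖x‖ :=
        add_le_add (mul_le_mul (hM k) (norm_apply_le x k) (norm_nonneg _) hM')
          (mul_le_mul (add_le_add (hM k) hM0) (norm_apply_le x 0) (norm_nonneg _) (by linarith))
    _ = 3 * M * ‖x‖ := by ring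

structure IsBVExtension {E : Type*} [NormedAddCommGroup E] [NormedSpace ℂ E] (σ : Set ℝ)
    (T : E →L[ℂ] E) (C : ℝ) (Ψ : (ℝ → ℂ) → E →L[ℂ] E) : Prop where
  map_add {f g : ℝ → ℂ} : BoundedVariationOn f σ → BoundedVariationOn g σ →
    Ψ (f + g) = Ψ f + Ψ g
  map_mul {f g : ℝ → ℂ} : BoundedVariationOn f σ → BoundedVariationOn g σ →
    Ψ (f * g) = (Ψ f).comp (Ψ g)
  norm_le {f : ℝ → ℂ} : BoundedVariationOn f σ → ‖Ψ f‖ ≤ C * bvNorm σ f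
  map_polynomial (p : ℂ[X]) : Ψ (fun t : ℝ => p.eval (t : ℂ)) = aeval T p

theorem HasBVExtension.exists_isBVExtension {E : Type*} [NormedAddCommGroup E]
    [NormedSpace ℂ E] {σ : Set ℝ} {T : E →L[ℂ] E} (h : HasBVExtension σ T) :
    ∃ C Ψ, IsBVExtension σ T C Ψ :=
  let ⟨C, _, Ψ, hmul, hle, hpoly⟩ := h
  ⟨C, Ψ, fun hf hg => (hmul _ _ hf hg).1, fun hf hg => (hmul _ _ hf hg).2, hle _, hpoly⟩

namespace IsBVExtension

section

variable {E : Type*} [NormedAddCommGroup E] [NormedSpace ℂ E] {σ : Set ℝ} {T : E →L[ℂ] E}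
  {C : ℝ} {Ψ : (ℝ → ℂ) → E →L[ℂ] E}

theorem map_one (hΨ : IsBVExtension σ T C Ψ) : Ψ 1 = 1 := by
  simpa [Pi.one_def] using hΨ.map_polynomial 1

theorem comp_commute (hΨ : IsBVExtension σ T C Ψ) (hσ : IsCompact σ) {f : ℝ → ℂ}
    (hf : BoundedVariationOn f σ) : (Ψ f).comp T = T.comp (Ψ f) := by
  have hid := boundedVariationOn_polynomial_eval hσ X
  have hT : Ψ (fun t : ℝ => (X : ℂ[X]).eval (t : ℂ)) = T := by simpa using hΨ.map_polynomial X
  rw [← hT, ← hΨ.map_mul hf hid, ← hΨ.map_mul hid hf, mul_comm]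

theorem apply_eq_zero_of_bump (hΨ : IsBVExtension σ T C Ψ) (hσ : IsCompact σ) {f : ℝ → ℂ}
    (hf : BoundedVariationOn f σ) {l : ℝ} (hl : l ≠ 0) (hl2 : |l| ≤ 2) {x : E}
    (hx : ∀ m, aeval T (bump l m) x = x)
    (hsmall : ∀ m, BoundedVariationOn (f * fun t : ℝ => (bump l m).eval (t : ℂ)) σ ∧
      bvNorm σ (f * fun t : ℝ => (bump l m).eval (t : ℂ)) ≤ 3 * bumpFun l m 0) :
    Ψ f x = 0 := by
  have hle : ∀ m, ‖Ψ f x‖ ≤ C * bvNorm σ (f * fun t : ℝ => (bump l m).eval (t : ℂ)) * ‖x‖ :=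
    fun m => by
      have hfx : Ψ f x = Ψ (f * fun t : ℝ => (bump l m).eval (t : ℂ)) x := by
        rw [hΨ.map_mul hf (boundedVariationOn_polynomial_eval hσ _),
          ContinuousLinearMap.comp_apply, hΨ.map_polynomial, hx m]
      rw [hfx]
      exact (Ψ _).le_of_opNorm_le (hΨ.norm_le (hsmall m).1) x
  have hsmall_lim : Tendsto (fun m => bvNorm σ (f * fun t : ℝ => (bump l m).eval (t : ℂ)))
      atTop (𝓝 0) := by
    refine squeeze_zero (fun m => bvNorm_nonneg _ _) (fun m => (hsmall m).2) ?_
    simpa using (tendsto_bumpFun_zero hl hl2).const_mul 3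
  have hlim := (hsmall_lim.const_mul C).mul_const ‖x‖
  rw [mul_zero, zero_mul] at hlim
  exact norm_le_zero_iff.1 (ge_of_tendsto' hlim hle)

end

section

variable {C : ℝ} {Ψ : (ℝ → ℂ) → C₀(ℕ, ℂ) →L[ℂ] C₀(ℕ, ℂ)}

theorem heaviside_apply_unitVec (hΨ : IsBVExtension sigma0 opT C Ψ) {n : ℕ} (hn : n ≠ 0) :
    Ψ heaviside (unitVec n) = heaviside (lam n) • unitVec n := by
  set l := lam n
  have hl : l ∈ Icc (-1) 1 := sigma0_subset_Icc (lam_mem_sigma0 n)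
  have hs : sigma0 ⊆ Icc (l - 2) (l + 2) := fun t ht =>
    ⟨by linarith [hl.2, (sigma0_subset_Icc ht).1], by linarith [hl.1, (sigma0_subset_Icc ht).2]⟩
  have hvanish : ∀ f, BoundedVariationOn f sigma0 →
      (∀ m, BoundedVariationOn (f * fun t : ℝ => (bump l m).eval (t : ℂ)) sigma0 ∧
        bvNorm sigma0 (f * fun t : ℝ => (bump l m).eval (t : ℂ)) ≤ 3 * bumpFun l m 0) →
      Ψ f (unitVec n) = 0 := fun f hf hsmall =>
    hΨ.apply_eq_zero_of_bump sigma0_isCompact hf (lam_ne_zero hn)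
      (abs_le.2 ⟨by linarith [hl.1], by linarith [hl.2]⟩)
      (fun m => by
        rw [aeval_opT_unitVec _ hn, bump_eval, bumpFun_self, Complex.ofReal_one, one_smul])
      hsmall
  rcases (lam_ne_zero hn).lt_or_gt with hneg | hpos
  · rw [heaviside_of_nonpos hneg.le, zero_smul]
    exact hvanish _ (boundedVariationOn_heaviside _)
      (bvNorm_heaviside_mul_bump_le hs ⟨by linarith [hl.1], hneg.le⟩)
  · have hcompl := hvanish _ (boundedVariationOn_indicator_Iic _)
      (bvNorm_indicator_Iic_mul_bump_le hs ⟨hpos.le, by linarith [hl.2]⟩)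
    have hsum := congrArg (fun S => S (unitVec n)) (hΨ.map_add (boundedVariationOn_heaviside _)
      (boundedVariationOn_indicator_Iic _))
    simp only [heaviside_add_indicator_Iic, hΨ.map_one, _root_.add_apply, hcompl, add_zero,
      one_apply_eq_self] at hsum
    rw [heaviside_of_pos hpos, one_smul, ← hsum]

theorem heaviside_apply_unitVec_zero (hΨ : IsBVExtension sigma0 opT C Ψ) {j : ℕ} (hj : j ≠ 0) :
    Ψ heaviside (unitVec 0) j + Ψ heaviside (unitVec 0) 0 = heaviside (lam j) := by
  have hcomm := congrArg (fun S => S (unitVec 0))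
    (hΨ.comp_commute sigma0_isCompact (boundedVariationOn_heaviside _))
  simp only [ContinuousLinearMap.comp_apply, opT_unitVec_zero] at hcomm
  have hj' := congrArg (fun y : C₀(ℕ, ℂ) => y j) hcomm
  simp only [opT_apply] at hj'
  rw [apply_apply_of_apply_unitVec _ _ (fun n hn => hΨ.heaviside_apply_unitVec hn)
    (by simp [lamVec, lam_zero])] at hj'
  simp only [lamVec, mkNat_apply] at hj'
  exact mul_left_cancel₀ (Complex.ofReal_ne_zero.2 (lam_ne_zero hj))
    (hj'.symm.trans (mul_comm _ _))

end

end IsBVExtension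

theorem not_tendsto_heaviside_lam (a : ℂ) :
    ¬ Tendsto (fun j => heaviside (lam j)) atTop (𝓝 a) := by
  intro h
  have hodd : Tendsto (fun i => heaviside (lam (2 * i + 1))) atTop (𝓝 a) :=
    h.comp (tendsto_atTop_atTop.2 fun b => ⟨b, fun i hi => by omega⟩)
  have heven : Tendsto (fun i => heaviside (lam (2 * i + 2))) atTop (𝓝 a) :=
    h.comp (tendsto_atTop_atTop.2 fun b => ⟨b, fun i hi => by omega⟩)
  have hodd' : ∀ i, heaviside (lam (2 * i + 1)) = 0 := fun i =>
    heaviside_of_nonpos (lam_neg_of_odd (odd_two_mul_add_one i)).le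
  have heven' : ∀ i, heaviside (lam (2 * i + 2)) = 1 := fun i =>
    heaviside_of_pos (lam_pos_of_even ⟨i + 1, by ring⟩ (by omega))
  simp only [hodd'] at hodd
  simp only [heven'] at heven
  exact zero_ne_one ((tendsto_nhds_unique tendsto_const_nhds hodd).trans
    (tendsto_nhds_unique heven tendsto_const_nhds))

theorem not_hasBVExtension_opT : ¬ HasBVExtension sigma0 opT := by
  intro h
  obtain ⟨C, Ψ, hΨ⟩ := h.exists_isBVExtension
  set w := Ψ heaviside (unitVec 0)
  have hw : Tendsto (fun j => w j + w 0) atTop (𝓝 (w 0)) := by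
    simpa using (tendsto_apply_atTop w).add_const (w 0)
  exact not_tendsto_heaviside_lam (w 0)
    (hw.congr' ((eventually_ne_atTop 0).mono fun _ hj => hΨ.heaviside_apply_unitVec_zero hj))

end

/-- There exist a bounded linear operator `T` on `c₀` and a constant `C > 0`
such that `‖p(T)‖ ≤ C·(sup_{t∈σ₀}|p(t)| + var_{σ₀}(p))` for every complex polynomial `p`, yet
there is no `BV(σ₀)` extension of the polynomial calculus of `T`. -/
theorem stmt3 :
    ∃ (T : C₀(ℕ, ℂ) →L[ℂ] C₀(ℕ, ℂ)) (C : ℝ), 0 < C ∧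
      (∀ p : Polynomial ℂ,
        ‖(Polynomial.aeval T p : C₀(ℕ, ℂ) →L[ℂ] C₀(ℕ, ℂ))‖ ≤
          C * bvNorm sigma0 (fun t : ℝ => p.eval (t : ℂ))) ∧
      ¬ HasBVExtension sigma0 T :=
  ⟨opT, 3, by norm_num, norm_aeval_opT_le, not_hasBVExtension_opT⟩
end

section
/- Let (Ω, Σ, μ) be a measure space, let 1 ≤ r < s ≤ ∞, let A be a normed algebra over ℂ, and let M > 0. Suppose that for each p ∈ (r,s) there is a map Ψ_p : A → B(L^p(μ)) (bounded operators on the complex space L^p(μ)) that is linear and multiplicative, with ‖Ψ_p(a)‖ ≤ M‖a‖ for all a ∈ A, and that the family is consistent: Ψ_p(a)x = Ψ_q(a)x μ-almost everywhere whenever a ∈ A, p, q ∈ (r,s), and x ∈ L^p(μ) ∩ L^q(μ). Then there exists a linear and multiplicative map Ψ_r : A → B(L^r(μ)) such that ‖Ψ_r(a)‖ ≤ M‖a‖ for all a ∈ A, and Ψ_r(a)x = Ψ_p(a)x μ-almost everywhere for every a ∈ A, p ∈ (r,s), and x ∈ L^r(μ) ∩ L^p(μ). -/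
/-!
Pick exponents `P n ∈ (r, s)` decreasing to `r`. On simple functions, which lie in every
`L^p`, set `Ψ_r(a) x := Ψ_{P 0}(a) x`. Consistency gives `‖Ψ_r(a) x‖_{P n} ≤ M‖a‖ ‖x‖_{P n}` for
every `n`; letting `n → ∞` (Fatou on the left, dominated convergence on the right) yields
`‖Ψ_r(a) x‖_r ≤ M‖a‖ ‖x‖_r`, so `Ψ_r(a)` extends by density to `L^r`. Approximating
`x ∈ L^r ∩ L^p` by simple functions in both norms shows that the extension is consistent with
every `Ψ_p(a)`. A bounded operator on `L^r` is determined by its values on simple functions, so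
linearity and multiplicativity of `a ↦ Ψ_r(a)` follow from those of `Ψ_{P 0}`.
-/

open MeasureTheory Filter Topology ENNReal

theorem ENNReal.tendsto_const_rpow {ι : Type*} {l : Filter ι} {c : ℝ≥0∞} (hc : c ≠ ∞)
    {t : ι → ℝ} {T : ℝ} (hT : 0 < T) (ht : Tendsto t l (𝓝 T)) :
    Tendsto (fun i => c ^ t i) l (𝓝 (c ^ T)) := by
  lift c to NNReal using hc
  have hpos : ∀ᶠ i in l, 0 < t i := ht.eventually (eventually_gt_nhds hT)
  rw [← coe_rpow_of_nonneg _ hT.le]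
  refine (ENNReal.tendsto_coe.2 ((tendsto_const_nhds (x := c)).nnrpow ht (Or.inr hT))).congr' ?_
  filter_upwards [hpos] with i hi
  rw [coe_rpow_of_nonneg _ hi.le]

namespace MeasureTheory

variable {α E : Type*} [MeasurableSpace α] {μ : Measure α} [NormedAddCommGroup E]

theorem eLpNorm_rpow_toReal_eq_lintegral {f : α → E} {p : ℝ≥0∞} (hp0 : p ≠ 0)
    (hp : p ≠ ∞) : eLpNorm f p μ ^ p.toReal = ∫⁻ x, ‖f x‖ₑ ^ p.toReal ∂μ := by
  rw [eLpNorm_eq_eLpNorm' hp0 hp, lintegral_rpow_enorm_eq_rpow_eLpNorm' (toReal_pos hp0 hp)]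

theorem lintegral_rpow_enorm_le_liminf_of_tendsto_exponent {g : α → E}
    (hg : AEStronglyMeasurable g μ) {q : ℝ≥0∞} (hq0 : q ≠ 0) (hq : q ≠ ∞) {P : ℕ → ℝ≥0∞}
    (hP : Tendsto P atTop (𝓝 q)) :
    ∫⁻ x, ‖g x‖ₑ ^ q.toReal ∂μ ≤ liminf (fun n => ∫⁻ x, ‖g x‖ₑ ^ (P n).toReal ∂μ) atTop := by
  have hPq : Tendsto (fun n => (P n).toReal) atTop (𝓝 q.toReal) :=
    (tendsto_toReal hq).comp hP
  calc ∫⁻ x, ‖g x‖ₑ ^ q.toReal ∂μ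
      = ∫⁻ x, liminf (fun n => ‖g x‖ₑ ^ (P n).toReal) atTop ∂μ := by
        refine lintegral_congr fun x => ?_
        exact ((tendsto_const_rpow enorm_ne_top (toReal_pos hq0 hq) hPq).liminf_eq).symm
    _ ≤ _ := lintegral_liminf_le' fun n => hg.enorm.pow_const _

theorem tendsto_lintegral_rpow_enorm_of_tendsto_exponent {f : α → E} {a b q : ℝ≥0∞}
    (ha : a ≠ 0) (hb : b ≠ ∞) (hfa : MemLp f a μ) (hfb : MemLp f b μ) {P : ℕ → ℝ≥0∞}
    (haP : ∀ n, a ≤ P n) (hPb : ∀ n, P n ≤ b) (hP : Tendsto P atTop (𝓝 q)) :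
    Tendsto (fun n => ∫⁻ x, ‖f x‖ₑ ^ (P n).toReal ∂μ) atTop
      (𝓝 (∫⁻ x, ‖f x‖ₑ ^ q.toReal ∂μ)) := by
  have haq : a ≤ q := ge_of_tendsto' hP haP
  have hq : q ≠ ∞ := ne_top_of_le_ne_top hb (le_of_tendsto' hP hPb)
  have ha_top : a ≠ ∞ := ne_top_of_le_ne_top hq haq
  have hb0 : b ≠ 0 := (ha.bot_lt.trans_le ((haP 0).trans (hPb 0))).ne'
  have hPtop : ∀ n, P n ≠ ∞ := fun n => ne_top_of_le_ne_top hb (hPb n)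
  have hPq : Tendsto (fun n => (P n).toReal) atTop (𝓝 q.toReal) :=
    (tendsto_toReal hq).comp hP
  -- `‖f‖ ^ P n ≤ ‖f‖ ^ a` where `‖f‖ ≤ 1`, and `‖f‖ ^ P n ≤ ‖f‖ ^ b` elsewhere
  refine tendsto_lintegral_of_dominated_convergence'
    (fun x => ‖f x‖ₑ ^ a.toReal + ‖f x‖ₑ ^ b.toReal)
    (fun n => hfa.aestronglyMeasurable.enorm.pow_const _) (fun n => ?_) ?_ ?_
  · refine Eventually.of_forall fun x => ?_
    rcases le_total ‖f x‖ₑ 1 with h1 | h1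
    · exact (rpow_le_rpow_of_exponent_ge h1 (toReal_mono (hPtop n) (haP n))).trans le_self_add
    · exact (rpow_le_rpow_of_exponent_le h1 (toReal_mono hb (hPb n))).trans le_add_self
  · rw [lintegral_add_left' (hfa.aestronglyMeasurable.enorm.pow_const _)]
    exact add_ne_top.2 ⟨(lintegral_rpow_enorm_lt_top_of_eLpNorm_lt_top ha ha_top hfa.2).ne,
      (lintegral_rpow_enorm_lt_top_of_eLpNorm_lt_top hb0 hb hfb.2).ne⟩
  · exact Eventually.of_forall fun x => tendsto_const_rpow enorm_ne_top
      (toReal_pos (ha.bot_lt.trans_le haq).ne' hq) hPq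

theorem eLpNorm_le_mul_of_tendsto_exponent {F : Type*} [NormedAddCommGroup F] {f : α → E}
    {g : α → F} {q b C : ℝ≥0∞} (hq0 : q ≠ 0) (hb : b ≠ ∞) (hfq : MemLp f q μ)
    (hfb : MemLp f b μ) (hg : AEStronglyMeasurable g μ) (hC : C ≠ ∞) {P : ℕ → ℝ≥0∞}
    (hqP : ∀ n, q ≤ P n) (hPb : ∀ n, P n ≤ b) (hP : Tendsto P atTop (𝓝 q))
    (hgf : ∀ n, eLpNorm g (P n) μ ≤ C * eLpNorm f (P n) μ) :
    eLpNorm g q μ ≤ C * eLpNorm f q μ := by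
  have hq : q ≠ ∞ := ne_top_of_le_ne_top hb (le_of_tendsto' hP hPb)
  have hP0 : ∀ n, P n ≠ 0 := fun n => (hq0.bot_lt.trans_le (hqP n)).ne'
  have hPtop : ∀ n, P n ≠ ∞ := fun n => ne_top_of_le_ne_top hb (hPb n)
  have hqpos : 0 < q.toReal := toReal_pos hq0 hq
  have hgP : ∀ n, ∫⁻ x, ‖g x‖ₑ ^ (P n).toReal ∂μ
      ≤ C ^ (P n).toReal * ∫⁻ x, ‖f x‖ₑ ^ (P n).toReal ∂μ := fun n => by
    rw [← eLpNorm_rpow_toReal_eq_lintegral (hP0 n) (hPtop n),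
      ← eLpNorm_rpow_toReal_eq_lintegral (hP0 n) (hPtop n),
      ← mul_rpow_of_nonneg _ _ toReal_nonneg]
    exact rpow_le_rpow (hgf n) toReal_nonneg
  have hlim : Tendsto (fun n => C ^ (P n).toReal * ∫⁻ x, ‖f x‖ₑ ^ (P n).toReal ∂μ) atTop
      (𝓝 (C ^ q.toReal * ∫⁻ x, ‖f x‖ₑ ^ q.toReal ∂μ)) := by
    have hfq' : ∫⁻ x, ‖f x‖ₑ ^ q.toReal ∂μ ≠ ∞ :=
      (lintegral_rpow_enorm_lt_top_of_eLpNorm_lt_top hq0 hq hfq.2).ne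
    exact ENNReal.Tendsto.mul (tendsto_const_rpow hC hqpos ((tendsto_toReal hq).comp hP))
      (Or.inr hfq') (tendsto_lintegral_rpow_enorm_of_tendsto_exponent hq0 hb hfq hfb hqP hPb hP)
      (Or.inr (rpow_ne_top_of_nonneg hqpos.le hC))
  rw [← rpow_le_rpow_iff hqpos, mul_rpow_of_nonneg _ _ hqpos.le,
    eLpNorm_rpow_toReal_eq_lintegral hq0 hq, eLpNorm_rpow_toReal_eq_lintegral hq0 hq]
  calc ∫⁻ x, ‖g x‖ₑ ^ q.toReal ∂μ
      ≤ liminf (fun n => ∫⁻ x, ‖g x‖ₑ ^ (P n).toReal ∂μ) atTop :=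
        lintegral_rpow_enorm_le_liminf_of_tendsto_exponent hg hq0 hq hP
    _ ≤ liminf (fun n => C ^ (P n).toReal * ∫⁻ x, ‖f x‖ₑ ^ (P n).toReal ∂μ) atTop :=
        liminf_le_liminf (Eventually.of_forall hgP)
    _ = C ^ q.toReal * ∫⁻ x, ‖f x‖ₑ ^ q.toReal ∂μ := hlim.liminf_eq

theorem SimpleFunc.memLp_of_memLp {f : SimpleFunc α E} {p : ℝ≥0∞} (hp0 : p ≠ 0)
    (hp : p ≠ ∞) (hf : MemLp f p μ) (q : ℝ≥0∞) : MemLp f q μ :=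
  SimpleFunc.memLp_of_finite_measure_preimage q ((SimpleFunc.memLp_iff hp0 hp).1 hf)

namespace Lp

variable {𝕜 : Type*} [NontriviallyNormedField 𝕜] [NormedSpace 𝕜 E] {p q u : ℝ≥0∞}

theorem ae_eq_of_tendsto {ι : Type*} {l : Filter ι} [l.NeBot] [l.IsCountablyGenerated]
    [Fact (1 ≤ p)] [Fact (1 ≤ q)] {f : ι → Lp E p μ} {g : ι → Lp E q μ} {x : Lp E p μ}
    {y : Lp E q μ} (hf : Tendsto f l (𝓝 x)) (hg : Tendsto g l (𝓝 y))
    (hfg : ∀ i, (f i : α → E) =ᵐ[μ] g i) : (x : α → E) =ᵐ[μ] y :=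
  tendstoInMeasure_ae_unique (tendstoInMeasure_of_tendsto_Lp hf)
    ((tendstoInMeasure_of_tendsto_Lp hg).congr_left fun i => (hfg i).symm)

noncomputable def linearMapOfMemLp {V : Type*} [AddCommGroup V] [Module 𝕜 V]
    (G : V →ₗ[𝕜] Lp E p μ) (hG : ∀ v, MemLp (G v) q μ) : V →ₗ[𝕜] Lp E q μ where
  toFun v := (hG v).toLp (G v)
  map_add' v w := by
    rw [← MemLp.toLp_add]
    exact MemLp.toLp_congr _ _ (by rw [map_add]; exact coeFn_add _ _)
  map_smul' c v := by
    rw [RingHom.id_apply, ← MemLp.toLp_const_smul]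
    exact MemLp.toLp_congr _ _ (by rw [map_smul]; exact coeFn_smul _ _)

theorem coeFn_linearMapOfMemLp {V : Type*} [AddCommGroup V] [Module 𝕜 V]
    (G : V →ₗ[𝕜] Lp E p μ) (hG : ∀ v, MemLp (G v) q μ) (v : V) :
    (linearMapOfMemLp G hG v : α → E) =ᵐ[μ] G v :=
  (hG v).coeFn_toLp

attribute [local instance] simpleFunc.module simpleFunc.normedSpace

theorem simpleFunc.memLp_of_ne_zero_of_ne_top (hp0 : p ≠ 0) (hp : p ≠ ∞)
    (x : Lp.simpleFunc E p μ) (q : ℝ≥0∞) : MemLp (x : Lp E p μ) q μ :=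
  (SimpleFunc.memLp_of_memLp hp0 hp (simpleFunc.memLp x) q).ae_eq
    (simpleFunc.toSimpleFunc_eq_toFun x)

variable (𝕜) in
noncomputable def simpleFuncInclusion [Fact (1 ≤ p)] (hp : p ≠ ∞) (q : ℝ≥0∞) [Fact (1 ≤ q)] :
    Lp.simpleFunc E p μ →ₗ[𝕜] Lp E q μ :=
  linearMapOfMemLp (simpleFunc.coeToLp α E 𝕜).toLinearMap
    (simpleFunc.memLp_of_ne_zero_of_ne_top (one_pos.trans_le Fact.out).ne' hp · q)

theorem coeFn_simpleFuncInclusion [Fact (1 ≤ p)] (hp : p ≠ ∞) [Fact (1 ≤ q)]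
    (x : Lp.simpleFunc E p μ) :
    (simpleFuncInclusion 𝕜 hp q x : α → E) =ᵐ[μ] (x : Lp E p μ) :=
  coeFn_linearMapOfMemLp _ _ x

section Consistency

variable [Fact (1 ≤ p)] [Fact (1 ≤ q)] [Fact (1 ≤ u)]

-- `T` and `S` agree on `L^p ∩ L^q`, whose elements are pairs of a.e. equal `x` and `y`.
def Consistent (T : Lp E p μ →L[𝕜] Lp E p μ) (S : Lp E q μ →L[𝕜] Lp E q μ) : Prop :=
  ∀ (x : Lp E p μ) (y : Lp E q μ), (x : α → E) =ᵐ[μ] y → (T x : α → E) =ᵐ[μ] S y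

theorem consistent_of_simpleFunc (hp : p ≠ ∞) (hq : q ≠ ∞) {T : Lp E p μ →L[𝕜] Lp E p μ}
    {S : Lp E q μ →L[𝕜] Lp E q μ}
    (h : ∀ (f : SimpleFunc α E) (hfp : MemLp f p μ) (hfq : MemLp f q μ),
      (T (hfp.toLp f) : α → E) =ᵐ[μ] S (hfq.toLp f)) :
    Consistent T S := by
  intro x y hxy
  borelize E
  have hxp : MemLp x p μ := Lp.memLp x
  have hxq : MemLp x q μ := (Lp.memLp y).ae_eq hxy.symm
  have hx := Lp.stronglyMeasurable x
  have : TopologicalSpace.SeparableSpace (Set.range x ∪ {0} : Set E) :=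
    hx.separableSpace_range_union_singleton
  have hy : hxq.toLp x = y := by
    rw [← toLp_coeFn y (Lp.memLp y)]
    exact MemLp.toLp_congr _ _ hxy
  -- the approximating simple functions of `x` converge to `x` in both `L^p` and `L^q`
  refine ae_eq_of_tendsto (l := atTop) ((T.continuous.tendsto x).comp ?_)
    ((S.continuous.tendsto y).comp ?_) fun n =>
      h _ (SimpleFunc.memLp_approxOn_range hx.measurable hxp n)
        (SimpleFunc.memLp_approxOn_range hx.measurable hxq n)
  · simpa only [toLp_coeFn] using SimpleFunc.tendsto_approxOn_range_Lp hp hx.measurable hxp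
  · simpa only [hy] using SimpleFunc.tendsto_approxOn_range_Lp hq hx.measurable hxq

namespace Consistent

variable {T T' : Lp E p μ →L[𝕜] Lp E p μ} {S S' : Lp E q μ →L[𝕜] Lp E q μ}
  {U : Lp E u μ →L[𝕜] Lp E u μ}

theorem symm (h : Consistent T S) : Consistent S T :=
  fun y x hyx => (h x y hyx.symm).symm

theorem add (h : Consistent T S) (h' : Consistent T' S') : Consistent (T + T') (S + S') := by
  intro x y hxy
  filter_upwards [h x y hxy, h' x y hxy, coeFn_add (T x) (T' x), coeFn_add (S y) (S' y)]
    with ω h₁ h₂ h₃ h₄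
  simp only [add_apply, h₃, h₄, Pi.add_apply, h₁, h₂]

theorem smul (c : 𝕜) (h : Consistent T S) : Consistent (c • T) (c • S) := by
  intro x y hxy
  filter_upwards [h x y hxy, coeFn_smul c (T x), coeFn_smul c (S y)] with ω h₁ h₂ h₃
  simp only [smul_apply, h₂, h₃, Pi.smul_apply, h₁]

theorem comp (h : Consistent T S) (h' : Consistent T' S') : Consistent (T.comp T') (S.comp S') :=
  fun x y hxy => h _ _ (h' x y hxy)

theorem eq (h : Consistent T T') : T = T' :=
  ContinuousLinearMap.ext fun x => Lp.ext (h x x EventuallyEq.rfl)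

-- a simple function in `L^p` has finite-measure support, hence lies in `L^q` as well
theorem trans (hp0 : p ≠ 0) (hp : p ≠ ∞) (hu : u ≠ ∞) (h : Consistent T S)
    (h' : Consistent S U) : Consistent T U :=
  consistent_of_simpleFunc hp hu fun _ hfp hfu =>
    let hfq := SimpleFunc.memLp_of_memLp hp0 hp hfp q
    (h _ _ (hfp.coeFn_toLp.trans hfq.coeFn_toLp.symm)).trans
      (h' _ _ (hfq.coeFn_toLp.trans hfu.coeFn_toLp.symm))

theorem unique (hp0 : p ≠ 0) (hp : p ≠ ∞) (h : Consistent T S) (h' : Consistent T' S) :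
    T = T' :=
  (h.trans hp0 hp hp h'.symm).eq

end Consistent

end Consistency

section Extrapolation

variable {r : ℝ≥0∞} {P : ℕ → ℝ≥0∞} [∀ n, Fact (1 ≤ P n)] {C : ℝ}
  {T : ∀ n, Lp E (P n) μ →L[𝕜] Lp E (P n) μ}

theorem eLpNorm_apply_le_of_tendsto_exponent (hP : Antitone P) (hPr : Tendsto P atTop (𝓝 r))
    (hP0 : P 0 ≠ ∞) (hT : ∀ n, ‖T n‖ ≤ C) (hcons : ∀ n, Consistent (T 0) (T n))
    {x : Lp E (P 0) μ} (hxr : MemLp x r μ) (hxP : ∀ n, MemLp x (P n) μ) :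
    eLpNorm (T 0 x) r μ ≤ ENNReal.ofReal C * eLpNorm x r μ := by
  have hr0 : r ≠ 0 := (one_pos.trans_le (ge_of_tendsto' hPr fun n => (Fact.out : 1 ≤ P n))).ne'
  refine eLpNorm_le_mul_of_tendsto_exponent hr0 hP0 hxr (Lp.memLp x) (Lp.aestronglyMeasurable _)
    ofReal_ne_top (hP.le_of_tendsto hPr) (fun n => hP n.zero_le) hPr fun n => ?_
  let y := (hxP n).toLp x
  calc eLpNorm (T 0 x) (P n) μ = ‖T n y‖ₑ :=
        (eLpNorm_congr_ae (hcons n x y (hxP n).coeFn_toLp.symm)).trans (enorm_def _).symm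
    _ ≤ ‖T n‖ₑ * ‖y‖ₑ := (T n).le_opENorm y
    _ ≤ ENNReal.ofReal C * eLpNorm x (P n) μ := by
        rw [enorm_def, eLpNorm_congr_ae (hxP n).coeFn_toLp, ← ofReal_norm]
        gcongr
        exact hT n

theorem exists_consistent_opNorm_le_of_tendsto_exponent [CompleteSpace E] [Fact (1 ≤ r)]
    (hP : Antitone P) (hPr : Tendsto P atTop (𝓝 r)) (hP0 : P 0 ≠ ∞) (hT : ∀ n, ‖T n‖ ≤ C)
    (hcons : ∀ n, Consistent (T 0) (T n)) :
    ∃ Tr : Lp E r μ →L[𝕜] Lp E r μ, ‖Tr‖ ≤ C ∧ Consistent Tr (T 0) := by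
  have hr0 : r ≠ 0 := (one_pos.trans_le Fact.out).ne'
  have hr : r ≠ ∞ := ne_top_of_le_ne_top hP0 (hP.le_of_tendsto hPr 0)
  have hC : 0 ≤ C := (norm_nonneg _).trans (hT 0)
  let ι : Lp.simpleFunc E r μ →ₗ[𝕜] Lp E (P 0) μ := simpleFuncInclusion 𝕜 hr (P 0)
  have hι : ∀ x, (ι x : α → E) =ᵐ[μ] (x : Lp E r μ) := coeFn_simpleFuncInclusion hr
  have hιmem : ∀ x q, MemLp (ι x) q μ := fun x q =>
    (simpleFunc.memLp_of_ne_zero_of_ne_top hr0 hr x q).ae_eq (hι x).symm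
  have hbound : ∀ x,
      eLpNorm (T 0 (ι x)) r μ ≤ ENNReal.ofReal C * eLpNorm (x : Lp E r μ) r μ := fun x => by
    rw [← eLpNorm_congr_ae (hι x)]
    exact eLpNorm_apply_le_of_tendsto_exponent hP hPr hP0 hT hcons (hιmem x r) (hιmem x <| P ·)
  have hmem : ∀ x, MemLp (T 0 (ι x)) r μ := fun x =>
    ⟨Lp.aestronglyMeasurable _,
      (hbound x).trans_lt (mul_lt_top ofReal_lt_top (Lp.eLpNorm_lt_top _))⟩
  let G : Lp.simpleFunc E r μ →ₗ[𝕜] Lp E r μ := linearMapOfMemLp ((T 0).toLinearMap ∘ₗ ι) hmem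
  have hG : ∀ x, (G x : α → E) =ᵐ[μ] T 0 (ι x) := coeFn_linearMapOfMemLp _ hmem
  let F : Lp.simpleFunc E r μ →L[𝕜] Lp E r μ := G.mkContinuous C fun x => by
    change _ ≤ C * ‖(x : Lp E r μ)‖
    rw [norm_def, eLpNorm_congr_ae (hG x), norm_def, ← toReal_ofReal hC, ← toReal_mul]
    exact toReal_mono (mul_ne_top ofReal_ne_top (Lp.eLpNorm_ne_top _)) (hbound x)
  let e : Lp.simpleFunc E r μ →L[𝕜] Lp E r μ := simpleFunc.coeToLp α E 𝕜
  have he : DenseRange e := simpleFunc.denseRange hr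
  have hFe : ∀ x, F.extend e (e x) = F x := F.extend_eq he simpleFunc.isUniformInducing
  refine ⟨F.extend e, ?_, consistent_of_simpleFunc hr hP0 fun f hfr hf0 => ?_⟩
  · calc ‖F.extend e‖ ≤ (1 : NNReal) * ‖F‖ :=
          F.opNorm_extend_le he fun x => by rw [NNReal.coe_one, one_mul]; rfl
      _ ≤ C := by simpa using G.mkContinuous_norm_le hC _
  · have hx : hfr.toLp f = e (SimpleFunc.toLp f hfr) := rfl
    have hιf : ι (SimpleFunc.toLp f hfr) = hf0.toLp f :=
      Lp.ext ((hι _).trans (hfr.coeFn_toLp.trans hf0.coeFn_toLp.symm))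
    rw [hx, hFe, ← hιf]
    exact hG _

end Extrapolation

end Lp

end MeasureTheory

theorem stmt12_general {Ω : Type*} [MeasurableSpace Ω] (μ : Measure Ω)
    {A : Type*} [NormedRing A] [NormedAlgebra ℂ A]
    (r s : ℝ≥0∞) (hr : 1 ≤ r) (hrs : r < s) (M : ℝ)
    (Ψ : ∀ (p : ℝ≥0∞) [Fact (1 ≤ p)], r < p → p < s → A → Lp ℂ p μ →L[ℂ] Lp ℂ p μ)
    (hadd : ∀ (p : ℝ≥0∞) [Fact (1 ≤ p)] (hp : r < p) (hps : p < s) (a b : A),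
      Ψ p hp hps (a + b) = Ψ p hp hps a + Ψ p hp hps b)
    (hsmul : ∀ (p : ℝ≥0∞) [Fact (1 ≤ p)] (hp : r < p) (hps : p < s) (c : ℂ) (a : A),
      Ψ p hp hps (c • a) = c • Ψ p hp hps a)
    (hmul : ∀ (p : ℝ≥0∞) [Fact (1 ≤ p)] (hp : r < p) (hps : p < s) (a b : A),
      Ψ p hp hps (a * b) = (Ψ p hp hps a).comp (Ψ p hp hps b))
    (hbound : ∀ (p : ℝ≥0∞) [Fact (1 ≤ p)] (hp : r < p) (hps : p < s) (a : A),
      ‖Ψ p hp hps a‖ ≤ M * ‖a‖)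
    (hcons : ∀ (p q : ℝ≥0∞) [Fact (1 ≤ p)] [Fact (1 ≤ q)]
        (hp : r < p) (hps : p < s) (hq : r < q) (hqs : q < s) (a : A)
        (x : Lp ℂ p μ) (y : Lp ℂ q μ), (x : Ω → ℂ) =ᵐ[μ] (y : Ω → ℂ) →
        (Ψ p hp hps a x : Ω → ℂ) =ᵐ[μ] (Ψ q hq hqs a y : Ω → ℂ)) :
    haveI : Fact (1 ≤ r) := ⟨hr⟩
    ∃ Ψr : A → Lp ℂ r μ →L[ℂ] Lp ℂ r μ,
      (∀ a b : A, Ψr (a + b) = Ψr a + Ψr b) ∧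
      (∀ (c : ℂ) (a : A), Ψr (c • a) = c • Ψr a) ∧
      (∀ a b : A, Ψr (a * b) = (Ψr a).comp (Ψr b)) ∧
      (∀ a : A, ‖Ψr a‖ ≤ M * ‖a‖) ∧
      (∀ (a : A) (p : ℝ≥0∞) [Fact (1 ≤ p)] (hp : r < p) (hps : p < s)
        (x : Lp ℂ r μ) (y : Lp ℂ p μ), (x : Ω → ℂ) =ᵐ[μ] (y : Ω → ℂ) →
          (Ψr a x : Ω → ℂ) =ᵐ[μ] (Ψ p hp hps a y : Ω → ℂ)) := by
  have : Fact (1 ≤ r) := ⟨hr⟩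
  have hr0 : r ≠ 0 := (one_pos.trans_le hr).ne'
  have hr_top : r ≠ ∞ := hrs.ne_top
  obtain ⟨P, hP_anti, hP_mem, hP_lim⟩ := exists_seq_strictAnti_tendsto' hrs
  have : ∀ n, Fact (1 ≤ P n) := fun n => ⟨hr.trans (hP_mem n).1.le⟩
  have hext : ∀ a, ∃ T : Lp ℂ r μ →L[ℂ] Lp ℂ r μ,
      ‖T‖ ≤ M * ‖a‖ ∧ Lp.Consistent T (Ψ (P 0) (hP_mem 0).1 (hP_mem 0).2 a) := fun a =>
    Lp.exists_consistent_opNorm_le_of_tendsto_exponent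
      (T := fun n => Ψ (P n) (hP_mem n).1 (hP_mem n).2 a) hP_anti.antitone hP_lim
      (hP_mem 0).2.ne_top (fun n => hbound _ _ _ a) (fun n => hcons _ _ _ _ _ _ a)
  choose Ψr hΨr_norm hΨr_cons using hext
  refine ⟨Ψr, fun a b => ?_, fun c a => ?_, fun a b => ?_, hΨr_norm,
    fun a p _ hp hps => (hΨr_cons a).trans hr0 hr_top hps.ne_top (hcons _ _ _ _ _ _ a)⟩
  · refine (hΨr_cons (a + b)).unique hr0 hr_top ?_
    rw [hadd]
    exact (hΨr_cons a).add (hΨr_cons b)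
  · refine (hΨr_cons (c • a)).unique hr0 hr_top ?_
    rw [hsmul]
    exact (hΨr_cons a).smul c
  · refine (hΨr_cons (a * b)).unique hr0 hr_top ?_
    rw [hmul]
    exact (hΨr_cons a).comp (hΨr_cons b)

/-- Let `(Ω, Σ, μ)` be a measure space, `1 ≤ r < s ≤ ∞`, `A` a normed
algebra over `ℂ` and `M > 0`.  If for each `p ∈ (r,s)` there is a linear multiplicative map
`Ψ_p : A → B(L^p(μ))` with `‖Ψ_p(a)‖ ≤ M‖a‖`, and the family is consistent (`Ψ_p(a)x = Ψ_q(a)x`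
a.e. for `x ∈ L^p ∩ L^q`), then there is a linear multiplicative map `Ψ_r : A → B(L^r(μ))`
with `‖Ψ_r(a)‖ ≤ M‖a‖` and `Ψ_r(a)x = Ψ_p(a)x` a.e. for all `a`, `p ∈ (r,s)` and
`x ∈ L^r ∩ L^p`. -/
theorem stmt12 {Ω : Type*} [MeasurableSpace Ω] (μ : Measure Ω)
    {A : Type*} [NormedRing A] [NormedAlgebra ℂ A]
    (r s : ℝ≥0∞) (hr : 1 ≤ r) (hrs : r < s) (hs : s ≤ ∞) (M : ℝ) (hM : 0 < M)
    (Ψ : ∀ (p : ℝ≥0∞) [Fact (1 ≤ p)], r < p → p < s → A → Lp ℂ p μ →L[ℂ] Lp ℂ p μ)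
    (hadd : ∀ (p : ℝ≥0∞) [Fact (1 ≤ p)] (hp : r < p) (hps : p < s) (a b : A),
      Ψ p hp hps (a + b) = Ψ p hp hps a + Ψ p hp hps b)
    (hsmul : ∀ (p : ℝ≥0∞) [Fact (1 ≤ p)] (hp : r < p) (hps : p < s) (c : ℂ) (a : A),
      Ψ p hp hps (c • a) = c • Ψ p hp hps a)
    (hmul : ∀ (p : ℝ≥0∞) [Fact (1 ≤ p)] (hp : r < p) (hps : p < s) (a b : A),
      Ψ p hp hps (a * b) = (Ψ p hp hps a).comp (Ψ p hp hps b))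
    (hbound : ∀ (p : ℝ≥0∞) [Fact (1 ≤ p)] (hp : r < p) (hps : p < s) (a : A),
      ‖Ψ p hp hps a‖ ≤ M * ‖a‖)
    (hcons : ∀ (p q : ℝ≥0∞) [Fact (1 ≤ p)] [Fact (1 ≤ q)]
        (hp : r < p) (hps : p < s) (hq : r < q) (hqs : q < s) (a : A)
        (x : Lp ℂ p μ) (y : Lp ℂ q μ), (x : Ω → ℂ) =ᵐ[μ] (y : Ω → ℂ) →
        (Ψ p hp hps a x : Ω → ℂ) =ᵐ[μ] (Ψ q hq hqs a y : Ω → ℂ)) :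
    haveI : Fact (1 ≤ r) := ⟨hr⟩
    ∃ Ψr : A → Lp ℂ r μ →L[ℂ] Lp ℂ r μ,
      (∀ a b : A, Ψr (a + b) = Ψr a + Ψr b) ∧
      (∀ (c : ℂ) (a : A), Ψr (c • a) = c • Ψr a) ∧
      (∀ a b : A, Ψr (a * b) = (Ψr a).comp (Ψr b)) ∧
      (∀ a : A, ‖Ψr a‖ ≤ M * ‖a‖) ∧
      (∀ (a : A) (p : ℝ≥0∞) [Fact (1 ≤ p)] (hp : r < p) (hps : p < s)
        (x : Lp ℂ r μ) (y : Lp ℂ p μ), (x : Ω → ℂ) =ᵐ[μ] (y : Ω → ℂ) →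
          (Ψr a x : Ω → ℂ) =ᵐ[μ] (Ψ p hp hps a y : Ω → ℂ)) :=
  stmt12_general μ r s hr hrs M Ψ hadd hsmul hmul hbound hcons
end
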